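/- Let λ ∈ ℂ. There exists a nonzero ℂ^{ℓ+1}-valued polynomial function F satisfying s(1−s)F″(s) + (B − s·C)F′(s) + (Λ₀ − λ)F(s) = 0 for all s ∈ ℝ if and only if λ = −n(n+2) for some nonnegative integer n. -/

import Mathlib

/-!
Componentwise the equation reads `H_j(F_j) = (j+1) F_{j+1}'`, where `H_j` is Gauss's hypergeometric
operator with `c = j + 3/2`, `a + b + 1 = 2j + 3` and `ab = j(j+2) + λ`, and `F_{ℓ+1} = 0`.
If `N` is the largest degree of a component and `F_j` has degree `N`, the coefficient of `s^N` in
this equation only sees the leading coefficient of `F_j`: every other contribution comes from a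
coefficient of `s^(N+1)`. It equals `-(λ + (N+j)(N+j+2))` times that leading coefficient, so
`λ = -n(n+2)` with `n = N + j`. Conversely, for `λ = -n(n+2)` the vector
`(₂F₁(-n, n+2; 3/2; s), 0, …, 0)` is a solution, since the terminating Gauss series solves `H_0`.
-/

namespace Stmt8

/-- `B = Σ_j (j+3/2) E_{jj} - Σ_{j=0}^{ℓ-1} (j+1) E_{j,j+1}`. -/
noncomputable def Bmat (ℓ : ℕ) : Matrix (Fin (ℓ+1)) (Fin (ℓ+1)) ℂ :=
  Matrix.of fun j k =>
    if j = k then ((j:ℕ):ℂ) + 3/2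
    else if (j:ℕ) + 1 = (k:ℕ) then -(((j:ℕ):ℂ) + 1)
    else 0

/-- `C = Σ_j (2j+3) E_{jj}`. -/
noncomputable def Cmat (ℓ : ℕ) : Matrix (Fin (ℓ+1)) (Fin (ℓ+1)) ℂ :=
  Matrix.diagonal fun j => 2*((j:ℕ):ℂ) + 3

/-- `Λ₀ = -Σ_j j(j+2) E_{jj}`. -/
noncomputable def Lam0 (ℓ : ℕ) : Matrix (Fin (ℓ+1)) (Fin (ℓ+1)) ℂ :=
  Matrix.diagonal fun j => -(((j:ℕ):ℂ) * (((j:ℕ):ℂ) + 2))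

/-- The `ℂ^{ℓ+1}`-valued function determined by a vector of polynomials. -/
def polyFun (ℓ : ℕ) (q : Fin (ℓ+1) → Polynomial ℂ) : ℝ → Fin (ℓ+1) → ℂ :=
  fun s j => (q j).eval (s:ℂ)

/-- The matrix hypergeometric equation
`s(1-s)F'' + (B - sC)F' + (Λ₀ - λ)F = 0` for all real `s`. -/
def SatisfiesODE (ℓ : ℕ) (lam : ℂ) (q : Fin (ℓ+1) → Polynomial ℂ) : Prop :=
  ∀ s : ℝ,
    ((s:ℂ) * (1 - (s:ℂ))) • deriv (deriv (polyFun ℓ q)) s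
      + (Bmat ℓ - (s:ℂ) • Cmat ℓ).mulVec (deriv (polyFun ℓ q) s)
      + (Lam0 ℓ - lam • (1 : Matrix (Fin (ℓ+1)) (Fin (ℓ+1)) ℂ)).mulVec (polyFun ℓ q s) = 0

end Stmt8

open Polynomial
open scoped Matrix

theorem ordinaryHypergeometricCoefficient_succ {𝕂 : Type*} [Field 𝕂] [CharZero 𝕂] (a b c : 𝕂)
    (k : ℕ) (hc : c + k ≠ 0) :
    (k + 1) * (c + k) * ordinaryHypergeometricCoefficient a b c (k + 1)
      = (a + k) * (b + k) * ordinaryHypergeometricCoefficient a b c k := by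
  simp only [ordinaryHypergeometricCoefficient, ascPochhammer_succ_eval, Nat.factorial_succ,
    Nat.cast_mul, mul_inv]
  have : (k + 1 : 𝕂) ≠ 0 := by exact_mod_cast k.succ_ne_zero
  field_simp
  push_cast
  ring

theorem ordinaryHypergeometricCoefficient_neg_nat_of_lt {𝕂 : Type*} [Field 𝕂] (b c : 𝕂)
    {n k : ℕ} (h : n < k) : ordinaryHypergeometricCoefficient (-(n : 𝕂)) b c k = 0 := by
  simp only [ordinaryHypergeometricCoefficient, ascPochhammer_eval_neg_coe_nat_of_lt h, mul_zero,
    zero_mul]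

namespace Polynomial

section HypergeometricOperator

variable {R : Type*} [CommRing R]

/-- `X(1-X)D² + (c - dX)D - e`; Gauss's equation is the case `d = a + b + 1`, `e = ab`. -/
noncomputable def hypergeometricOperator (c d e : R) (p : R[X]) : R[X] :=
  X * (1 - X) * derivative (derivative p) + (C c - C d * X) * derivative p - C e * p

theorem coeff_hypergeometricOperator (c d e : R) (p : R[X]) (m : ℕ) :
    (hypergeometricOperator c d e p).coeff m
      = (m + 1) * (m + c) * p.coeff (m + 1) - (m * (m - 1) + d * m + e) * p.coeff m := by
  have coeff_X_mul_ite : ∀ r : R[X], (X * r).coeff m = if m = 0 then 0 else r.coeff (m - 1) := by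
    intro r; rcases m with _ | m <;> simp [coeff_X_mul]
  have coeff_X_sq_mul : ∀ r : R[X], (X ^ 2 * r).coeff m = if m ≤ 1 then 0 else r.coeff (m - 2) := by
    intro r; rw [coeff_X_pow_mul']; split_ifs <;> first | rfl | omega
  have expand : hypergeometricOperator c d e p = X * derivative (derivative p)
      - X ^ 2 * derivative (derivative p) + C c * derivative p - C d * (X * derivative p)
      - C e * p := by
    unfold hypergeometricOperator; ring
  rw [expand]
  simp only [coeff_sub, coeff_add, coeff_C_mul, coeff_X_mul_ite, coeff_X_sq_mul, coeff_derivative]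
  rcases m with _ | _ | m
  · simp
  · simp; ring
  · simp; ring

end HypergeometricOperator

section HypergeometricPoly

variable {𝕂 : Type*} [Field 𝕂]

/-- The terminating Gauss series `₂F₁(-n, b; c; X)`. -/
noncomputable def hypergeometricPoly (n : ℕ) (b c : 𝕂) : 𝕂[X] :=
  ∑ k ∈ Finset.range (n + 1), C (ordinaryHypergeometricCoefficient (-(n : 𝕂)) b c k) * X ^ k

theorem coeff_hypergeometricPoly (n : ℕ) (b c : 𝕂) (m : ℕ) :
    (hypergeometricPoly n b c).coeff m = ordinaryHypergeometricCoefficient (-(n : 𝕂)) b c m := by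
  simp only [hypergeometricPoly, finsetSum_coeff, coeff_C_mul_X_pow]
  rw [Finset.sum_ite_eq]
  split_ifs with h
  · rfl
  · exact (ordinaryHypergeometricCoefficient_neg_nat_of_lt b c (by simpa using h)).symm

theorem hypergeometricPoly_ne_zero (n : ℕ) (b c : 𝕂) : hypergeometricPoly n b c ≠ 0 := fun h => by
  simpa [h, ordinaryHypergeometricCoefficient] using coeff_hypergeometricPoly n b c 0

theorem hypergeometricOperator_hypergeometricPoly [CharZero 𝕂] (n : ℕ) (b c : 𝕂)
    (hc : ∀ k : ℕ, c + k ≠ 0) :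
    hypergeometricOperator c (b - n + 1) (-n * b) (hypergeometricPoly n b c) = 0 := by
  ext m
  rw [coeff_hypergeometricOperator, coeff_hypergeometricPoly, coeff_hypergeometricPoly,
    coeff_zero]
  linear_combination ordinaryHypergeometricCoefficient_succ (-(n : 𝕂)) b c m (hc m)

end HypergeometricPoly

theorem eq_zero_of_forall_eval_ofReal (p : ℂ[X]) (h : ∀ s : ℝ, p.eval (s : ℂ) = 0) : p = 0 :=
  p.eq_zero_of_infinite_isRoot <|
    (Set.infinite_range_of_injective Complex.ofReal_injective).mono <| by
      rintro _ ⟨s, rfl⟩; exact h s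

theorem exists_ne_zero_forall_degree_le {ι R : Type*} [Finite ι] [Semiring R]
    (q : ι → R[X]) (hq : q ≠ 0) : ∃ j, q j ≠ 0 ∧ ∀ i, (q i).degree ≤ (q j).degree := by
  obtain ⟨i, hi⟩ := Function.ne_iff.1 hq
  have : Nonempty ι := ⟨i⟩
  obtain ⟨j, hj⟩ := Finite.exists_max fun i => (q i).degree
  refine ⟨j, fun h => hi ?_, hj⟩
  simpa [h] using hj i

end Polynomial

namespace Stmt8

section NextEntry

variable {α β : Type*} [Zero α] [Zero β] {m : ℕ}

def nextEntry (v : Fin m → α) (j : Fin m) : α :=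
  if h : (j : ℕ) + 1 < m then v ⟨j + 1, h⟩ else 0

theorem nextEntry_comp (f : α → β) (hf : f 0 = 0) (v : Fin m → α) (j : Fin m) :
    nextEntry (fun i => f (v i)) j = f (nextEntry v j) := by
  unfold nextEntry; split_ifs <;> simp [hf]

theorem nextEntry_single_zero [NeZero m] (x : α) (j : Fin m) :
    nextEntry (Pi.single 0 x) j = 0 := by
  unfold nextEntry
  split_ifs with h
  · exact Pi.single_eq_of_ne (M := fun _ => α) (i := 0) (i' := ⟨j + 1, h⟩)
      (Fin.ne_of_val_ne (by simp)) x
  · rfl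

end NextEntry

theorem Bmat_mulVec_apply (ℓ : ℕ) (v : Fin (ℓ+1) → ℂ) (j : Fin (ℓ+1)) :
    (Bmat ℓ *ᵥ v) j = ((j : ℕ) + 3/2 : ℂ) * v j - ((j : ℕ) + 1 : ℂ) * nextEntry v j := by
  rw [Matrix.mulVec, dotProduct, nextEntry]
  split_ifs with h
  · rw [Fintype.sum_eq_add j ⟨j + 1, h⟩ (by simp [Fin.ext_iff])]
    · simp [Bmat, Fin.ext_iff]; ring
    · rintro k ⟨hj, hk⟩
      have h1 : (j : ℕ) ≠ k := fun e => hj (Fin.ext e.symm)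
      have h2 : (j : ℕ) + 1 ≠ k := fun e => hk (Fin.ext e.symm)
      simp [Bmat, Fin.ext_iff, h1, h2]
  · rw [Fintype.sum_eq_single j]
    · simp [Bmat]
    · intro k hk
      have h1 : (j : ℕ) ≠ k := fun e => hk (Fin.ext e.symm)
      have h2 : (j : ℕ) + 1 ≠ k := by omega
      simp [Bmat, Fin.ext_iff, h1, h2]

theorem hasDerivAt_polyFun (ℓ : ℕ) (q : Fin (ℓ+1) → ℂ[X]) (s : ℝ) :
    HasDerivAt (polyFun ℓ q) (polyFun ℓ (fun j => derivative (q j)) s) s :=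
  hasDerivAt_pi.2 fun j => ((q j).hasDerivAt (s : ℂ)).comp_ofReal

theorem deriv_polyFun (ℓ : ℕ) (q : Fin (ℓ+1) → ℂ[X]) :
    deriv (polyFun ℓ q) = polyFun ℓ (fun j => derivative (q j)) :=
  funext fun s => (hasDerivAt_polyFun ℓ q s).deriv

theorem satisfiesODE_iff (ℓ : ℕ) (lam : ℂ) (q : Fin (ℓ+1) → ℂ[X]) :
    SatisfiesODE ℓ lam q ↔ ∀ j : Fin (ℓ+1),
      hypergeometricOperator (((j : ℕ) : ℂ) + 3/2) (2 * ((j : ℕ) : ℂ) + 3)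
        (((j : ℕ) : ℂ) * (((j : ℕ) : ℂ) + 2) + lam) (q j)
        = C ((j : ℕ) + 1 : ℂ) * derivative (nextEntry q j) := by
  have component : ∀ (s : ℝ) (j : Fin (ℓ+1)),
      (((s:ℂ) * (1 - (s:ℂ))) • deriv (deriv (polyFun ℓ q)) s
        + (Bmat ℓ - (s:ℂ) • Cmat ℓ) *ᵥ (deriv (polyFun ℓ q) s)
        + (Lam0 ℓ - lam • (1 : Matrix (Fin (ℓ+1)) (Fin (ℓ+1)) ℂ)) *ᵥ (polyFun ℓ q s)) j
      = (hypergeometricOperator (((j : ℕ) : ℂ) + 3/2) (2 * ((j : ℕ) : ℂ) + 3)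
          (((j : ℕ) : ℂ) * (((j : ℕ) : ℂ) + 2) + lam) (q j)
          - C ((j : ℕ) + 1 : ℂ) * derivative (nextEntry q j)).eval (s : ℂ) := by
    intro s j
    have eval_nextEntry : nextEntry (polyFun ℓ (fun i => derivative (q i)) s) j
        = (derivative (nextEntry q j)).eval (s : ℂ) := by
      rw [← nextEntry_comp _ (map_zero derivative) q j]
      exact nextEntry_comp (eval (s : ℂ)) eval_zero _ j
    simp only [deriv_polyFun, Matrix.sub_mulVec, Matrix.smul_mulVec, Pi.add_apply, Pi.sub_apply,
      Pi.smul_apply, smul_eq_mul, Bmat_mulVec_apply, Cmat, Lam0, Matrix.mulVec_diagonal,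
      Matrix.one_mulVec, eval_nextEntry]
    simp only [hypergeometricOperator, polyFun, eval_add, eval_sub, eval_mul, eval_C, eval_X,
      eval_one]
    ring
  simp only [SatisfiesODE, funext_iff, Pi.zero_apply, component]
  rw [forall_comm]
  refine forall_congr' fun j => ?_
  rw [← sub_eq_zero]
  exact ⟨eq_zero_of_forall_eval_ofReal _, fun h s => by rw [h, eval_zero]⟩

theorem lam_eq_of_satisfiesODE (ℓ : ℕ) (lam : ℂ) (q : Fin (ℓ+1) → ℂ[X])
    (hode : SatisfiesODE ℓ lam q) (j : Fin (ℓ+1)) (N : ℕ) (hN : (q j).coeff N ≠ 0)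
    (htop : ∀ i, (q i).coeff (N + 1) = 0) :
    lam = -((N + (j : ℕ) : ℕ) : ℂ) * (((N + (j : ℕ) : ℕ) : ℂ) + 2) := by
  have hnext : (nextEntry q j).coeff (N + 1) = 0 := by
    unfold nextEntry
    split_ifs
    exacts [htop _, coeff_zero _]
  have hcoeff := congrArg (coeff · N) ((satisfiesODE_iff ℓ lam q).1 hode j)
  simp only [coeff_hypergeometricOperator, coeff_C_mul, coeff_derivative, htop j, hnext] at hcoeff
  have : (lam + (N + (j : ℕ)) * (N + (j : ℕ) + 2)) * (q j).coeff N = 0 := by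
    linear_combination -hcoeff
  push_cast
  linear_combination (mul_eq_zero.1 this).resolve_right hN

/-- There is a nonzero `ℂ^{ℓ+1}`-valued polynomial solution of
`s(1-s)F'' + (B - sC)F' + (Λ₀ - λ)F = 0` if and only if `λ = -n(n+2)` for some
nonnegative integer `n`. -/
theorem polynomial_solution_iff (ℓ : ℕ) (lam : ℂ) :
    (∃ q : Fin (ℓ+1) → Polynomial ℂ, q ≠ 0 ∧ SatisfiesODE ℓ lam q) ↔
      ∃ n : ℕ, lam = -(n:ℂ) * ((n:ℂ) + 2) := by
  constructor
  · rintro ⟨q, hq, hode⟩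
    obtain ⟨j, hj, hmax⟩ := exists_ne_zero_forall_degree_le q hq
    refine ⟨(q j).natDegree + j, lam_eq_of_satisfiesODE ℓ lam q hode j _
      (leadingCoeff_ne_zero.2 hj) fun i => coeff_eq_zero_of_natDegree_lt ?_⟩
    exact Nat.lt_succ_of_le (natDegree_le_natDegree (hmax i))
  · rintro ⟨n, rfl⟩
    have hc : ∀ k : ℕ, (3 / 2 : ℂ) + k ≠ 0 := fun k => by
      norm_num [Complex.ext_iff]; positivity
    have hp := hypergeometricOperator_hypergeometricPoly n ((n : ℂ) + 2) (3 / 2) hc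
    rw [show (n : ℂ) + 2 - n + 1 = 3 by ring] at hp
    refine ⟨Pi.single 0 (hypergeometricPoly n ((n : ℂ) + 2) (3 / 2)), ?_,
      (satisfiesODE_iff ℓ _ _).2 fun j => ?_⟩
    · exact fun h => hypergeometricPoly_ne_zero n _ _ (by simpa using congrFun h 0)
    rw [nextEntry_single_zero, derivative_zero, mul_zero]
    rcases eq_or_ne j 0 with rfl | hj
    · convert hp using 2 <;> first | rfl | simp
    · simp [Pi.single_eq_of_ne hj, hypergeometricOperator]

end Stmt8
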